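/- arXiv:2504.04233 — 2 statements merged into one kernel-verified Lean document; each statement's English description precedes it below -/
import Mathlib

section
/- If a vertex v of a finite simple graph G is adjacent to at least two leaves, then v is free, i.e., v is not contained in any minimal completely flooding cascade set of G. -/
open scoped Classical
open Polynomial

/-- One step of the cascade sequence: add all vertices having at least two
neighbors in the current set. -/
noncomputable def floodStep {V : Type*} (G : SimpleGraph V) [Fintype V]
    (C : Finset V) : Finset V :=
  C ∪ Finset.univ.filter (fun x => 2 ≤ (C.filter (fun y => G.Adj x y)).card)

/-- `C` completely floods `G`: the cascade sequence stabilizes to all of `V`.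
Since `floodStep` is inflationary, this is equivalent to some iterate being `univ`. -/
def Floods {V : Type*} (G : SimpleGraph V) [Fintype V] (C : Finset V) : Prop :=
  ∃ k, (floodStep G)^[k] C = Finset.univ

/-- The flood polynomial of `G`. -/
noncomputable def floodPoly {V : Type*} (G : SimpleGraph V) [Fintype V] :
    Polynomial ℕ :=
  ∑ C ∈ Finset.univ.filter (fun C : Finset V => Floods G C), Polynomial.X ^ C.card

/-- The degree of a vertex. -/
noncomputable def deg {V : Type*} (G : SimpleGraph V) [Fintype V] (v : V) : ℕ :=
  (Finset.univ.filter (fun y => G.Adj v y)).card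

/-! A minimal flooding set contains every leaf, since a leaf can never acquire two flooded
neighbours. So if `v ∈ C` is adjacent to two leaves, those leaves alone flood `v` in one step,
and `C.erase v` still floods `G`, contradicting minimality. -/

section Flooding

variable {V : Type*} [Fintype V] {G : SimpleGraph V}

theorem floodStep_mono : Monotone (floodStep G) := by
  intro A B hAB
  refine Finset.union_subset_union hAB (Finset.monotone_filter_right _ fun x _ hx => ?_)
  exact hx.trans (Finset.card_le_card (Finset.filter_subset_filter _ hAB))

theorem subset_floodStep (C : Finset V) : C ⊆ floodStep G C :=
  Finset.subset_union_left

theorem mem_floodStep_of_adj_of_adj {C : Finset V} {v l₁ l₂ : V} (hne : l₁ ≠ l₂)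
    (ha₁ : G.Adj v l₁) (ha₂ : G.Adj v l₂) (hl₁ : l₁ ∈ C) (hl₂ : l₂ ∈ C) :
    v ∈ floodStep G C := by
  refine Finset.mem_union_right _ (Finset.mem_filter.mpr ⟨Finset.mem_univ _, ?_⟩)
  exact Finset.one_lt_card.mpr
    ⟨l₁, Finset.mem_filter.mpr ⟨hl₁, ha₁⟩, l₂, Finset.mem_filter.mpr ⟨hl₂, ha₂⟩, hne⟩

theorem mem_of_mem_floodStep_of_deg_le_one {C : Finset V} {l : V} (hd : deg G l ≤ 1)
    (hl : l ∈ floodStep G C) : l ∈ C := by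
  rcases Finset.mem_union.mp hl with hC | hnew
  · exact hC
  · have hcard : (C.filter (fun y => G.Adj l y)).card ≤ deg G l :=
      Finset.card_le_card (Finset.filter_subset_filter _ (Finset.subset_univ C))
    have := (Finset.mem_filter.mp hnew).2
    omega

theorem mem_of_mem_iterate_floodStep_of_deg_le_one {C : Finset V} {l : V} (hd : deg G l ≤ 1)
    (k : ℕ) (hl : l ∈ (floodStep G)^[k] C) : l ∈ C := by
  induction k with
  | zero => exact hl
  | succ k ih =>
    rw [Function.iterate_succ_apply'] at hl
    exact ih (mem_of_mem_floodStep_of_deg_le_one hd hl)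

theorem Floods.mem_of_deg_le_one {C : Finset V} (hC : Floods G C) {l : V}
    (hd : deg G l ≤ 1) : l ∈ C := by
  obtain ⟨k, hk⟩ := hC
  exact mem_of_mem_iterate_floodStep_of_deg_le_one hd k (hk ▸ Finset.mem_univ l)

theorem Floods.of_subset_floodStep {C D : Finset V} (hC : Floods G C)
    (hCD : C ⊆ floodStep G D) : Floods G D := by
  obtain ⟨k, hk⟩ := hC
  refine ⟨k + 1, Finset.univ_subset_iff.mp ?_⟩
  rw [← hk, Function.iterate_succ_apply]
  exact floodStep_mono.iterate k hCD

theorem subset_floodStep_erase {C : Finset V} {v : V} (hv : v ∈ floodStep G (C.erase v)) :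
    C ⊆ floodStep G (C.erase v) := by
  intro x hx
  by_cases hxv : x = v
  · exact hxv ▸ hv
  · exact subset_floodStep _ (Finset.mem_erase.mpr ⟨hxv, hx⟩)

end Flooding

theorem free_of_two_leaf_neighbors {V : Type*} [Fintype V] (G : SimpleGraph V)
    (v l₁ l₂ : V) (hne : l₁ ≠ l₂)
    (ha₁ : G.Adj v l₁) (ha₂ : G.Adj v l₂)
    (hd₁ : deg G l₁ = 1) (hd₂ : deg G l₂ = 1) :
    ∀ C : Finset V, Floods G C → (∀ D ⊂ C, ¬ Floods G D) → v ∉ C := by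
  intro C hC hmin hv
  have hl₁ : l₁ ∈ C.erase v := Finset.mem_erase.mpr ⟨ha₁.ne', hC.mem_of_deg_le_one hd₁.le⟩
  have hl₂ : l₂ ∈ C.erase v := Finset.mem_erase.mpr ⟨ha₂.ne', hC.mem_of_deg_le_one hd₂.le⟩
  have hv' : v ∈ floodStep G (C.erase v) := mem_floodStep_of_adj_of_adj hne ha₁ ha₂ hl₁ hl₂
  exact hmin _ (Finset.erase_ssubset hv) (hC.of_subset_floodStep (subset_floodStep_erase hv'))
end

section
/- Let P_n be the path graph with vertices v_1,…,v_n. A cascade set C completely floods P_n if and only if v_1 ∈ C, v_n ∈ C, and there are no two consecutive vertices v_i, v_{i+1} both missing from C. -/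
open scoped Classical
open Polynomial

/-! A set `S` of uncovered vertices each of which has at most one neighbour outside `S`
can never be flooded, since every vertex of `S` sees at most one flooded vertex at every stage.
On a path such a set is an uncovered endpoint or an uncovered pair of consecutive vertices.
Conversely, if there is neither, every uncovered vertex is interior with both neighbours in `C`,
so a single cascade step floods the path. -/

section Cascade

variable {V : Type*} (G : SimpleGraph V) [Fintype V]

lemma mem_floodStep {C : Finset V} {x : V} :
    x ∈ floodStep G C ↔ x ∈ C ∨ 2 ≤ (C.filter (fun y => G.Adj x y)).card := by
  simp [floodStep]

lemma disjoint_iterate_floodStep {S C : Finset V}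
    (hS : ∀ x ∈ S, {y | y ∉ S ∧ G.Adj x y}.Subsingleton) (hC : Disjoint S C) (k : ℕ) :
    Disjoint S ((floodStep G)^[k] C) := by
  induction k with
  | zero => exact hC
  | succ k ih =>
    rw [Function.iterate_succ_apply', Finset.disjoint_left]
    intro x hx hstep
    have hle : (((floodStep G)^[k] C).filter (fun y => G.Adj x y)).card ≤ 1 := by
      refine Finset.card_le_one.mpr fun y hy z hz => ?_
      rw [Finset.mem_filter] at hy hz
      exact hS x hx ⟨Finset.disjoint_right.mp ih hy.1, hy.2⟩ ⟨Finset.disjoint_right.mp ih hz.1, hz.2⟩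
    rcases (mem_floodStep G).mp hstep with hmem | htwo
    · exact Finset.disjoint_left.mp ih hx hmem
    · omega

lemma not_floods_of_disjoint {S C : Finset V} (hne : S.Nonempty)
    (hS : ∀ x ∈ S, {y | y ∉ S ∧ G.Adj x y}.Subsingleton) (hC : Disjoint S C) :
    ¬ Floods G C := by
  rintro ⟨k, hk⟩
  obtain ⟨x, hx⟩ := hne
  exact Finset.disjoint_left.mp (disjoint_iterate_floodStep G hS hC k) hx (hk ▸ Finset.mem_univ x)

lemma floodStep_eq_univ {C : Finset V}
    (h : ∀ x ∉ C, ∃ y ∈ C, ∃ z ∈ C, y ≠ z ∧ G.Adj x y ∧ G.Adj x z) :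
    floodStep G C = Finset.univ := by
  refine Finset.eq_univ_of_forall fun x => (mem_floodStep G).mpr ?_
  by_cases hx : x ∈ C
  · exact Or.inl hx
  · obtain ⟨y, hy, z, hz, hyz, hxy, hxz⟩ := h x hx
    exact Or.inr <| Finset.one_lt_card.mpr
      ⟨y, Finset.mem_filter.mpr ⟨hy, hxy⟩, z, Finset.mem_filter.mpr ⟨hz, hxz⟩, hyz⟩

end Cascade

section Path

open SimpleGraph

lemma pathGraph_subsingleton_adj_notMem_Icc {n : ℕ} {a b : Fin n}
    (h : a < b ∨ a.val = 0 ∨ b.val = n - 1) (x : Fin n) (hx : x ∈ Finset.Icc a b) :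
    {y | y ∉ Finset.Icc a b ∧ (pathGraph n).Adj x y}.Subsingleton := by
  intro y hy z hz
  simp only [Set.mem_ofPred_eq, Finset.mem_Icc, pathGraph_adj, Fin.le_def, Fin.lt_def] at hx hy hz h
  have := y.isLt
  have := z.isLt
  exact Fin.ext (by omega)

lemma not_floods_pathGraph {n : ℕ} {C : Finset (Fin n)} (a b : Fin n) (hab : a ≤ b)
    (h : a < b ∨ a.val = 0 ∨ b.val = n - 1) (hC : ∀ x ∈ Finset.Icc a b, x ∉ C) :
    ¬ Floods (pathGraph n) C :=
  not_floods_of_disjoint _ ⟨a, Finset.mem_Icc.mpr ⟨le_rfl, hab⟩⟩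
    (pathGraph_subsingleton_adj_notMem_Icc h) (Finset.disjoint_left.mpr hC)

lemma floods_pathGraph {n : ℕ} {C : Finset (Fin n)}
    (hends : ∀ x : Fin n, x.val = 0 ∨ x.val = n - 1 → x ∈ C)
    (hgap : ∀ x y : Fin n, x.val + 1 = y.val → x ∈ C ∨ y ∈ C) :
    Floods (pathGraph n) C := by
  refine ⟨1, floodStep_eq_univ _ fun x hx => ?_⟩
  have hinterior : x.val ≠ 0 ∧ x.val ≠ n - 1 := by
    by_contra! h
    exact hx (hends x (by omega))
  have := x.isLt
  refine ⟨⟨x - 1, by omega⟩, ?_, ⟨x + 1, by omega⟩, ?_, ?_, ?_, ?_⟩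
  · exact (hgap _ x (by dsimp only; omega)).resolve_right hx
  · exact (hgap x _ rfl).resolve_left hx
  · rw [Ne, Fin.ext_iff]; dsimp only; omega
  · rw [pathGraph_adj]; dsimp only; omega
  · rw [pathGraph_adj]; dsimp only; omega

end Path

theorem path_floods_iff (n : ℕ) (hn : 1 ≤ n) (C : Finset (Fin n)) :
    Floods (SimpleGraph.pathGraph n) C ↔
      ((⟨0, by omega⟩ : Fin n) ∈ C ∧ (⟨n - 1, by omega⟩ : Fin n) ∈ C ∧
        ∀ i : ℕ, (h : i + 1 < n) →
          ((⟨i, by omega⟩ : Fin n) ∈ C ∨ (⟨i + 1, h⟩ : Fin n) ∈ C)) := by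
  constructor
  · intro hfl
    refine ⟨?_, ?_, fun i h => ?_⟩ <;> by_contra! hout
    · exact not_floods_pathGraph ⟨0, by omega⟩ ⟨0, by omega⟩ le_rfl (by simp)
        (by simpa [Finset.Icc_self]) hfl
    · exact not_floods_pathGraph ⟨n - 1, by omega⟩ ⟨n - 1, by omega⟩ le_rfl (by simp)
        (by simpa [Finset.Icc_self]) hfl
    · refine not_floods_pathGraph ⟨i, by omega⟩ ⟨i + 1, h⟩ (by simp [Fin.le_def])
        (by simp [Fin.lt_def]) (fun x hx => ?_) hfl
      simp only [Finset.mem_Icc, Fin.le_def] at hx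
      obtain hxi | hxi : x.val = i ∨ x.val = i + 1 := by omega
      · exact (Fin.ext hxi : x = ⟨_, _⟩) ▸ hout.1
      · exact (Fin.ext hxi : x = ⟨_, _⟩) ▸ hout.2
  · rintro ⟨h0, hlast, hcons⟩
    refine floods_pathGraph (fun x hx => ?_) (fun x y hxy => ?_)
    · rcases hx with hx | hx
      · exact (Fin.ext hx : x = ⟨_, _⟩) ▸ h0
      · exact (Fin.ext hx : x = ⟨_, _⟩) ▸ hlast
    · have := hcons x (by omega)
      rwa [show y = ⟨x + 1, by omega⟩ from Fin.ext hxy.symm]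
end
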